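/- Let η > 0, α ≥ 0, β_I ≥ 0, β_C ≥ 0, c₀ ≥ 0, set m := max(α, β_I + β_C), assume m > 0, and set C := c₀/m. Let x₁, x₂ : ℕ → ℝ be nonnegative sequences satisfying x₁(k+1) ≤ x₁(k) + η·α·x₂(k) + c₀·η² and x₂(k+1) ≤ η·β_I·x₁(k) + (1 + η·β_C)·x₂(k) + c₀·η² for all k. Let a ≥ 0 and ε > 0 satisfy max(x₁(0), x₂(0)) ≤ a, a ≤ ε, and a + C·η > 0. Then for every natural number k with k ≤ (1/(η·m))·log((ε + C·η)/(a + C·η)), both x₁(k) ≤ ε and x₂(k) ≤ ε. -/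

import Mathlib

/-- Finite-horizon trapping: any evolution of the capability pair consistent with the
2D self-locking drift bounds stays below `ε` for all steps below the logarithmic
threshold. -/
theorem finite_horizon_trapping
    (η α βI βC c₀ : ℝ) (hη : 0 < η) (hα : 0 ≤ α) (hβI : 0 ≤ βI) (hβC : 0 ≤ βC)
    (hc : 0 ≤ c₀)
    (hm : 0 < max α (βI + βC))
    (x₁ x₂ : ℕ → ℝ) (h1 : ∀ k, 0 ≤ x₁ k) (h2 : ∀ k, 0 ≤ x₂ k)
    (hr1 : ∀ k, x₁ (k + 1) ≤ x₁ k + η * α * x₂ k + c₀ * η ^ 2)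
    (hr2 : ∀ k, x₂ (k + 1) ≤ η * βI * x₁ k + (1 + η * βC) * x₂ k + c₀ * η ^ 2)
    (a ε : ℝ) (ha : 0 ≤ a) (hε : 0 < ε)
    (hinit : max (x₁ 0) (x₂ 0) ≤ a) (haε : a ≤ ε)
    (hpos : 0 < a + (c₀ / max α (βI + βC)) * η) :
    ∀ k : ℕ,
      (k : ℝ) ≤ (1 / (η * max α (βI + βC))) *
        Real.log ((ε + (c₀ / max α (βI + βC)) * η) / (a + (c₀ / max α (βI + βC)) * η)) →
      x₁ k ≤ ε ∧ x₂ k ≤ ε := by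
  set m := max α (βI + βC) with hmdef
  set C := c₀ / m with hCdef
  have hαm : α ≤ m := le_max_left _ _
  have hβm : βI + βC ≤ m := le_max_right _ _
  have hCη : 0 ≤ C * η := mul_nonneg (div_nonneg hc hm.le) hη.le
  have hCm : C * m = c₀ := by rw [hCdef]; exact div_mul_cancel₀ c₀ hm.ne'
  -- envelope y k = max (x₁ k) (x₂ k)
  set y : ℕ → ℝ := fun k => max (x₁ k) (x₂ k) with hy
  have hy0 : ∀ k, 0 ≤ y k := fun k => le_trans (h1 k) (le_max_left _ _)
  have hstep : ∀ k, y (k + 1) + C * η ≤ (1 + η * m) * (y k + C * η) := by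
    intro k
    have hx1 : x₁ k ≤ y k := le_max_left _ _
    have hx2 : x₂ k ≤ y k := le_max_right _ _
    have key : (1 + η * m) * (y k + C * η) =
        (1 + η * m) * y k + C * η + c₀ * η ^ 2 := by
      have : η * m * (C * η) = c₀ * η ^ 2 := by
        rw [show η * m * (C * η) = (C * m) * η ^ 2 by ring, hCm]
      ring_nf
      ring_nf at this
      linarith [this]
    rw [key]
    have hb1 : x₁ (k + 1) ≤ (1 + η * m) * y k + c₀ * η ^ 2 := by
      have := hr1 k
      have h2' : η * α * x₂ k ≤ η * m * y k := by
        apply mul_le_mul (by nlinarith) hx2 (h2 k) (by positivity)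
      nlinarith [this, h2']
    have hb2 : x₂ (k + 1) ≤ (1 + η * m) * y k + c₀ * η ^ 2 := by
      have := hr2 k
      have hA : η * βI * x₁ k ≤ η * βI * y k :=
        mul_le_mul_of_nonneg_left hx1 (by positivity)
      have hB : (1 + η * βC) * x₂ k ≤ (1 + η * βC) * y k :=
        mul_le_mul_of_nonneg_left hx2 (by nlinarith)
      have hsum : η * βI * y k + (1 + η * βC) * y k ≤ (1 + η * m) * y k := by
        have : η * (βI + βC) ≤ η * m := by nlinarith
        nlinarith [hy0 k]
      linarith
    have : y (k + 1) ≤ (1 + η * m) * y k + c₀ * η ^ 2 := max_le hb1 hb2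
    linarith
  have hgeom : ∀ k : ℕ, y k + C * η ≤ (1 + η * m) ^ k * (a + C * η) := by
    intro k
    induction k with
    | zero =>
      simp only [pow_zero, one_mul]
      exact add_le_add_left hinit (C * η)
    | succ n ih =>
      have h1p : (0:ℝ) ≤ 1 + η * m := by nlinarith
      calc y (n + 1) + C * η ≤ (1 + η * m) * (y n + C * η) := hstep n
        _ ≤ (1 + η * m) * ((1 + η * m) ^ n * (a + C * η)) :=
            mul_le_mul_of_nonneg_left ih h1p
        _ = (1 + η * m) ^ (n + 1) * (a + C * η) := by ring
  intro k hk
  have hηm : 0 < η * m := mul_pos hη hm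
  have hlog : η * m * k ≤ Real.log ((ε + C * η) / (a + C * η)) := by
    rw [one_div, mul_comm] at hk
    calc η * m * k = k * (η * m) := by ring
      _ ≤ Real.log ((ε + C * η) / (a + C * η)) * (η * m)⁻¹ * (η * m) := by
          exact mul_le_mul_of_nonneg_right hk hηm.le
      _ = Real.log ((ε + C * η) / (a + C * η)) := by field_simp
  have hεpos : 0 < ε + C * η := by linarith
  have hratio : (0:ℝ) < (ε + C * η) / (a + C * η) := div_pos hεpos hpos
  have hexp : (1 + η * m) ^ k ≤ (ε + C * η) / (a + C * η) := by
    calc (1 + η * m) ^ k ≤ (Real.exp (η * m)) ^ k := by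
          apply pow_le_pow_left₀ (by nlinarith) (by linarith [Real.add_one_le_exp (η * m)])
      _ = Real.exp (η * m * k) := by
          rw [← Real.exp_nat_mul]; ring_nf
      _ ≤ Real.exp (Real.log ((ε + C * η) / (a + C * η))) := Real.exp_le_exp.mpr hlog
      _ = (ε + C * η) / (a + C * η) := Real.exp_log hratio
  have hfinal : y k + C * η ≤ ε + C * η := by
    calc y k + C * η ≤ (1 + η * m) ^ k * (a + C * η) := hgeom k
      _ ≤ ((ε + C * η) / (a + C * η)) * (a + C * η) :=
          mul_le_mul_of_nonneg_right hexp hpos.le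
      _ = ε + C * η := by field_simp
  have : y k ≤ ε := by linarith
  exact ⟨le_trans (le_max_left _ _) this, le_trans (le_max_right _ _) this⟩
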